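/- For every real s ≥ 0 and every α with 0 < α ≤ 1, there exists a constant c(α,s,d) > 0 such that for all A ∈ M_{s,α} and B ∈ M⁺_{s,α}: (i) the series e^B − Id := ∑_{k=1}^{∞} B^k/k! converges in M⁺_{s,α} and |e^B − Id|_{s,α+} ≤ |B|_{s,α+}·exp(c(α,s,d)|B|_{s,α+}); (ii) the series A·e^B := A + ∑_{k=1}^{∞} A B^k/k! and e^B·A := A + ∑_{k=1}^{∞} B^k A/k! converge in M_{s,α}, and |A e^B|_{s,α} ≤ |A|_{s,α}·exp(c(α,s,d)|B|_{s,α+}) and |e^B A|_{s,α} ≤ |A|_{s,α}·exp(c(α,s,d)|B|_{s,α+}). Here matrix products are defined entrywise by (AB)_a^b = ∑_{c∈E} A_a^c B_c^b (the sums converging absolutely). -/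

import Mathlib

/-- The index set `E`: `d`-tuples of odd positive integers. -/
abbrev OddTuple (d : ℕ) : Type := {a : Fin d → ℕ // ∀ i, Odd (a i)}

/-- The weight `w_a = i₁ + ⋯ + i_d`. -/
def wE {d : ℕ} (a : OddTuple d) : ℕ := ∑ i, a.1 i

/-- Each block `[a] = {b ∈ E : w_b = w_a}` is finite. -/
noncomputable instance blockFintype (d N : ℕ) : Fintype {a : OddTuple d // wE a = N} := by
  have key : ∀ a : {a : OddTuple d // wE a = N}, ∀ i, a.1.1 i < N + 1 := by
    intro a i
    have h1 : a.1.1 i ≤ ∑ j, a.1.1 j :=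
      Finset.single_le_sum (fun j _ => Nat.zero_le _) (Finset.mem_univ i)
    have h2 : wE a.1 = N := a.2
    simp only [wE] at h2
    omega
  exact Fintype.ofInjective
    (fun a => (fun i => (⟨a.1.1 i, key a i⟩ : Fin (N + 1))))
    (by
      intro a b h
      apply Subtype.ext
      apply Subtype.ext
      funext i
      exact congrArg Fin.val (congrFun h i))

/-- The operator norm `‖A_{[a]}^{[b]}‖` of the restriction of the infinite matrix `A` to the
block `[a] × [b]` (with `N = w_a`, `M = w_b`), between the Hermitian `ℓ²` spaces on the
blocks. -/
noncomputable def blockNorm {d : ℕ} (A : OddTuple d → OddTuple d → ℂ) (N M : ℕ) : ℝ :=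
  ‖LinearMap.toContinuousLinearMap
    (Matrix.toEuclideanLin
      (Matrix.of fun (a : {a : OddTuple d // wE a = N}) (b : {b : OddTuple d // wE b = M}) =>
        A a.1 b.1))‖

/-- The weight `(w_a w_b)^α ((√(min(w_a,w_b)) + |w_a − w_b|)/√(min(w_a,w_b)))^{s/2}`
appearing in the norm of `M_{s,α}`. -/
noncomputable def mwt (s α : ℝ) (N M : ℕ) : ℝ :=
  ((N : ℝ) * (M : ℝ)) ^ α *
    ((Real.sqrt (min (N : ℝ) (M : ℝ)) + |(N : ℝ) - (M : ℝ)|) /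
      Real.sqrt (min (N : ℝ) (M : ℝ))) ^ (s / 2)

/-- The weight appearing in the norm of `M⁺_{s,α}` (extra factor `1 + |w_a − w_b|`). -/
noncomputable def mwtPlus (s α : ℝ) (N M : ℕ) : ℝ :=
  ((N : ℝ) * (M : ℝ)) ^ α * (1 + |(N : ℝ) - (M : ℝ)|) *
    ((Real.sqrt (min (N : ℝ) (M : ℝ)) + |(N : ℝ) - (M : ℝ)|) /
      Real.sqrt (min (N : ℝ) (M : ℝ))) ^ (s / 2)

/-- `|A|_{s,α} ≤ C`, stated blockwise. -/
def MBound {d : ℕ} (s α : ℝ) (A : OddTuple d → OddTuple d → ℂ) (C : ℝ) : Prop :=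
  ∀ a b : OddTuple d, mwt s α (wE a) (wE b) * blockNorm A (wE a) (wE b) ≤ C

/-- `|A|_{s,α+} ≤ C`, stated blockwise. -/
def MPBound {d : ℕ} (s α : ℝ) (A : OddTuple d → OddTuple d → ℂ) (C : ℝ) : Prop :=
  ∀ a b : OddTuple d, mwtPlus s α (wE a) (wE b) * blockNorm A (wE a) (wE b) ≤ C

/-- Membership `A ∈ M_{s,α}`. -/
def MMem {d : ℕ} (s α : ℝ) (A : OddTuple d → OddTuple d → ℂ) : Prop := ∃ C, MBound s α A C

/-- Membership `A ∈ M⁺_{s,α}`. -/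
def MPMem {d : ℕ} (s α : ℝ) (A : OddTuple d → OddTuple d → ℂ) : Prop := ∃ C, MPBound s α A C

/-- The norm `|A|_{s,α}`, realized as the least upper bound. -/
noncomputable def MNorm {d : ℕ} (s α : ℝ) (A : OddTuple d → OddTuple d → ℂ) : ℝ :=
  sInf {C | 0 ≤ C ∧ MBound s α A C}

/-- The norm `|A|_{s,α+}`, realized as the least upper bound. -/
noncomputable def MPNorm {d : ℕ} (s α : ℝ) (A : OddTuple d → OddTuple d → ℂ) : ℝ :=
  sInf {C | 0 ≤ C ∧ MPBound s α A C}

/-- Entrywise matrix product `(AB)_a^b = ∑_{c∈E} A_a^c B_c^b` (a `tsum` over the countable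
index set `E`). -/
noncomputable def matMul {d : ℕ} (A B : OddTuple d → OddTuple d → ℂ) :
    OddTuple d → OddTuple d → ℂ :=
  fun a b => ∑' c : OddTuple d, A a c * B c b

/-- Matrix powers `B^k` (with `B^0 = Id`). -/
noncomputable def matPow {d : ℕ} (B : OddTuple d → OddTuple d → ℂ) :
    ℕ → OddTuple d → OddTuple d → ℂ
  | 0 => fun a b => if a = b then 1 else 0
  | k + 1 => matMul B (matPow B k)

/-- Convergence `T_m → S` of a sequence of matrices with respect to a given norm. -/
def MatTendsto {d : ℕ} (nrm : (OddTuple d → OddTuple d → ℂ) → ℝ)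
    (T : ℕ → OddTuple d → OddTuple d → ℂ) (S : OddTuple d → OddTuple d → ℂ) : Prop :=
  Filter.Tendsto (fun m => nrm (T m - S)) Filter.atTop (nhds 0)

/-!
The block norm of a product is at most the convolution `∑_K ‖A_{[N]}^{[K]}‖ ‖B_{[K]}^{[M]}‖`
(Cauchy–Schwarz inside a block gives absolute convergence of the entries). The weight of
`M_{s,α}` is submultiplicative up to the loss `K^{-2α}` of the intermediate block, because
`(NK)^α (KM)^α = (NM)^α K^{2α}` and the ratio `(√min + |N - M|)/√min` is submultiplicative. The
extra factor `1 + |K - M|` of `M⁺_{s,α}` turns this loss into the kernel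
`K^{-2α} (1 + |K - M|)⁻¹`, whose sum over `K` is bounded by some `T` uniformly in `M` (Young's
inequality). Hence `|AB|, |BA| ≤ T |A| |B|₊` and `|B₁B₂|₊ ≤ 2T |B₁|₊ |B₂|₊`, so
`|B^k|₊ ≤ |B|₊ (2T|B|₊)^{k-1}`, and the exponential series converge blockwise with the stated
bounds for `c = 2T`.
-/

namespace Matrix

open Finset
open scoped Matrix.Norms.L2Operator

variable {𝕜 l m n : Type*} [RCLike 𝕜] [Fintype l] [Fintype m] [Fintype n] [DecidableEq n]

theorem sqrt_sum_norm_sq_col_le (X : Matrix m n 𝕜) (j : n) :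
    √(∑ i, ‖X i j‖ ^ 2) ≤ ‖X‖ := by
  simpa [EuclideanSpace.norm_eq, mulVec_single_one] using
    X.l2_opNorm_mulVec (EuclideanSpace.single j 1)

theorem sqrt_sum_norm_sq_row_le (X : Matrix m n 𝕜) (i : m) :
    √(∑ j, ‖X i j‖ ^ 2) ≤ ‖X‖ := by
  classical
  simpa [l2_opNorm_conjTranspose] using Xᴴ.sqrt_sum_norm_sq_col_le i

theorem norm_entry_le_l2_opNorm (X : Matrix m n 𝕜) (i : m) (j : n) : ‖X i j‖ ≤ ‖X‖ := by
  calc ‖X i j‖ = √(‖X i j‖ ^ 2) := (Real.sqrt_sq (norm_nonneg _)).symm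
    _ ≤ √(∑ i', ‖X i' j‖ ^ 2) :=
      Real.sqrt_le_sqrt <|
        single_le_sum (f := fun i' => ‖X i' j‖ ^ 2) (fun _ _ => sq_nonneg _) (mem_univ i)
    _ ≤ ‖X‖ := X.sqrt_sum_norm_sq_col_le j

theorem sum_norm_mul_norm_le [DecidableEq m] (X : Matrix l m 𝕜) (Y : Matrix m n 𝕜) (i : l) (j : n) :
    ∑ k, ‖X i k‖ * ‖Y k j‖ ≤ ‖X‖ * ‖Y‖ := by
  calc ∑ k, ‖X i k‖ * ‖Y k j‖ ≤ √(∑ k, ‖X i k‖ ^ 2) * √(∑ k, ‖Y k j‖ ^ 2) :=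
        Real.sum_mul_le_sqrt_mul_sqrt _ _ _
    _ ≤ ‖X‖ * ‖Y‖ := mul_le_mul (X.sqrt_sum_norm_sq_row_le i) (Y.sqrt_sum_norm_sq_col_le j)
        (Real.sqrt_nonneg _) (norm_nonneg _)

end Matrix

open Finset
open scoped Matrix.Norms.L2Operator Nat

variable {d : ℕ}

abbrev Block (d N : ℕ) : Type := {a : OddTuple d // wE a = N}

noncomputable def blockMatrix (A : OddTuple d → OddTuple d → ℂ) (N M : ℕ) :
    Matrix (Block d N) (Block d M) ℂ :=
  Matrix.of fun a b => A a b

theorem blockNorm_eq_norm (A : OddTuple d → OddTuple d → ℂ) (N M : ℕ) :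
    blockNorm A N M = ‖blockMatrix A N M‖ := rfl

theorem blockNorm_nonneg (A : OddTuple d → OddTuple d → ℂ) (N M : ℕ) : 0 ≤ blockNorm A N M :=
  norm_nonneg _

theorem one_le_wE (hd : 1 ≤ d) (a : OddTuple d) : 1 ≤ wE a :=
  (a.2 ⟨0, hd⟩).pos.trans_le (single_le_sum (fun i _ => Nat.zero_le (a.1 i)) (mem_univ _))

theorem norm_le_blockNorm (A : OddTuple d → OddTuple d → ℂ) (a b : OddTuple d) :
    ‖A a b‖ ≤ blockNorm A (wE a) (wE b) :=
  (blockMatrix A _ _).norm_entry_le_l2_opNorm ⟨a, rfl⟩ ⟨b, rfl⟩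

theorem blockNorm_of_isEmpty_left (A : OddTuple d → OddTuple d → ℂ) {N : ℕ} (M : ℕ)
    [IsEmpty (Block d N)] : blockNorm A N M = 0 := by
  rw [blockNorm_eq_norm, Subsingleton.elim (blockMatrix A N M) 0, norm_zero]

theorem blockNorm_of_isEmpty_right (A : OddTuple d → OddTuple d → ℂ) (N : ℕ) {M : ℕ}
    [IsEmpty (Block d M)] : blockNorm A N M = 0 := by
  rw [blockNorm_eq_norm, Subsingleton.elim (blockMatrix A N M) 0, norm_zero]

theorem blockNorm_neg (A : OddTuple d → OddTuple d → ℂ) (N M : ℕ) :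
    blockNorm (-A) N M = blockNorm A N M :=
  norm_neg (blockMatrix A N M)

theorem blockNorm_add_le (A B : OddTuple d → OddTuple d → ℂ) (N M : ℕ) :
    blockNorm (A + B) N M ≤ blockNorm A N M + blockNorm B N M :=
  norm_add_le (blockMatrix A N M) (blockMatrix B N M)

theorem blockNorm_smul (c : ℂ) (A : OddTuple d → OddTuple d → ℂ) (N M : ℕ) :
    blockNorm (c • A) N M = ‖c‖ * blockNorm A N M :=
  norm_smul c (blockMatrix A N M)

theorem blockNorm_tsum_le {ι : Type*} {F : ι → OddTuple d → OddTuple d → ℂ} {N M : ℕ}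
    {u : ι → ℝ} (hu : Summable u) (hFu : ∀ i, blockNorm (F i) N M ≤ u i) :
    blockNorm (fun a b => ∑' i, F i a b) N M ≤ ∑' i, u i := by
  have hnorm : Summable fun i => ‖blockMatrix (F i) N M‖ :=
    hu.of_nonneg_of_le (fun i => norm_nonneg _) hFu
  have hblock : blockMatrix (fun a b => ∑' i, F i a b) N M = ∑' i, blockMatrix (F i) N M := by
    ext a b
    have hs : Summable fun i => blockMatrix (F i) N M := hnorm.of_norm
    exact (tsum_apply (Pi.summable.mp hs a)).symm.trans (congrFun (tsum_apply hs).symm b)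
  rw [blockNorm_eq_norm, hblock]
  exact (norm_tsum_le_tsum_norm hnorm).trans (hnorm.tsum_le_tsum hFu hu)

theorem matMul_eq_tsum_sum_block {A B : OddTuple d → OddTuple d → ℂ}
    (hAB : ∀ N M, Summable fun K => blockNorm A N K * blockNorm B K M) (a b : OddTuple d) :
    matMul A B a b = ∑' K, ∑ c : Block d K, A a c * B c b := by
  let e := Equiv.sigmaFiberEquiv (wE (d := d))
  have hslice (K : ℕ) : ∑ c : Block d K, ‖A a c * B c b‖
      ≤ blockNorm A (wE a) K * blockNorm B K (wE b) := by
    simp only [norm_mul]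
    exact (blockMatrix A (wE a) K).sum_norm_mul_norm_le (blockMatrix B K (wE b)) ⟨a, rfl⟩ ⟨b, rfl⟩
  have hsum : Summable fun p : Σ K, Block d K => A a (e p) * B (e p) b := by
    refine Summable.of_norm ((summable_sigma_of_nonneg fun _ => norm_nonneg _).mpr
      ⟨fun K => (hasSum_fintype _).summable, ?_⟩)
    refine (hAB (wE a) (wE b)).of_nonneg_of_le (fun K => tsum_nonneg fun _ => norm_nonneg _)
      fun K => ?_
    rw [tsum_fintype]
    exact hslice K
  rw [matMul, ← e.tsum_eq, hsum.tsum_sigma]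
  exact tsum_congr fun K => tsum_fintype _

theorem blockNorm_matMul_le {A B : OddTuple d → OddTuple d → ℂ}
    (hAB : ∀ N M, Summable fun K => blockNorm A N K * blockNorm B K M) (N M : ℕ) :
    blockNorm (matMul A B) N M ≤ ∑' K, blockNorm A N K * blockNorm B K M := by
  rw [show matMul A B = fun a b => ∑' K, ∑ c : Block d K, A a c * B c b from
    funext₂ (matMul_eq_tsum_sum_block hAB)]
  exact blockNorm_tsum_le (hAB N M) fun K =>
    Matrix.l2_opNorm_mul (blockMatrix A N K) (blockMatrix B K M)

noncomputable def blockRatio (x y : ℝ) : ℝ := (√(min x y) + |x - y|) / √(min x y)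

theorem blockRatio_comm (x y : ℝ) : blockRatio x y = blockRatio y x := by
  rw [blockRatio, blockRatio, min_comm, abs_sub_comm]

theorem one_le_blockRatio {x y : ℝ} (hx : 1 ≤ x) (hy : 1 ≤ y) : 1 ≤ blockRatio x y := by
  have hm : 0 < √(min x y) := Real.sqrt_pos.mpr (lt_min (by linarith) (by linarith))
  rw [blockRatio, le_div_iff₀ hm]
  linarith [abs_nonneg (x - y)]

theorem blockRatio_le_mul_of_le {x y z : ℝ} (hx : 1 ≤ x) (hy : 1 ≤ y) (hz : 1 ≤ z)
    (hxz : x ≤ z) : blockRatio x z ≤ blockRatio x y * blockRatio y z := by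
  have hsy : 1 ≤ √y := Real.one_le_sqrt.mpr hy
  have hx₀ : 0 ≤ √x := by positivity
  have hz₀ : 0 ≤ √z := by positivity
  have sqx := Real.mul_self_sqrt (zero_le_one.trans hx)
  have sqy := Real.mul_self_sqrt (zero_le_one.trans hy)
  rw [blockRatio, blockRatio, blockRatio, min_eq_left hxz, abs_sub_comm x z,
    abs_of_nonneg (sub_nonneg.mpr hxz), div_mul_div_comm]
  rcases le_total y x with hyx | hxy
  · rw [min_eq_right hyx, min_eq_left (hyx.trans hxz), abs_of_nonneg (sub_nonneg.mpr hyx),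
      abs_sub_comm, abs_of_nonneg (sub_nonneg.mpr (hyx.trans hxz)),
      div_le_div_iff₀ (by positivity) (by positivity)]
    have hyxy : y ≤ √x * √y := by
      nlinarith [mul_le_mul_of_nonneg_right (Real.sqrt_le_sqrt hyx) (zero_le_one.trans hsy)]
    nlinarith [mul_le_mul (by linarith : z - x ≤ z - y) hyxy (by linarith) (by linarith),
      mul_nonneg (mul_nonneg (sub_nonneg.2 hyx) (by linarith : 0 ≤ √y + (z - y))) hx₀]
  rcases le_total y z with hyz | hzy
  · rw [min_eq_left hxy, min_eq_left hyz, abs_sub_comm, abs_of_nonneg (sub_nonneg.mpr hxy),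
      abs_sub_comm, abs_of_nonneg (sub_nonneg.mpr hyz),
      div_le_div_iff₀ (by positivity) (by positivity)]
    -- as `√x + √y ≥ 1`
    have hkey : √y ≤ √x + (y - x) := by nlinarith [Real.sqrt_le_sqrt hxy]
    nlinarith [mul_nonneg (mul_nonneg (sub_nonneg.2 hyz) (sub_nonneg.2 hkey)) hx₀]
  · rw [min_eq_left hxy, min_eq_right hzy, abs_sub_comm, abs_of_nonneg (sub_nonneg.mpr hxy),
      abs_of_nonneg (sub_nonneg.mpr hzy), div_le_div_iff₀ (by positivity) (by positivity)]
    nlinarith [mul_nonneg (mul_nonneg (sub_nonneg.2 hzy) hz₀) hx₀,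
      mul_nonneg (mul_nonneg (by linarith : 0 ≤ √x + (y - x)) (sub_nonneg.2 hzy)) hx₀]

theorem blockRatio_le_mul {x y z : ℝ} (hx : 1 ≤ x) (hy : 1 ≤ y) (hz : 1 ≤ z) :
    blockRatio x z ≤ blockRatio x y * blockRatio y z := by
  rcases le_total x z with h | h
  · exact blockRatio_le_mul_of_le hx hy hz h
  · rw [blockRatio_comm, mul_comm, blockRatio_comm x, blockRatio_comm y]
    exact blockRatio_le_mul_of_le hz hy hx h

noncomputable def convKernel (α : ℝ) (M K : ℕ) : ℝ :=
  ((K : ℝ) ^ (2 * α))⁻¹ * (1 + |(K : ℝ) - M|)⁻¹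

theorem convKernel_nonneg (α : ℝ) (M K : ℕ) : 0 ≤ convKernel α M K := by
  unfold convKernel; positivity

/-- Young's inequality with exponents `(1 + α) / α` and `1 + α` splits the kernel into two
summable pieces, the second one uniformly in `M`. -/
theorem convKernel_le {α : ℝ} (hα : 0 < α) (M K : ℕ) :
    convKernel α M K ≤
      ((K : ℝ) ^ (2 + 2 * α))⁻¹ + 1 / |(((K : ℤ) - M : ℤ) : ℝ) + 1 / 2| ^ (1 + α) := by
  have hq : (1 + α).HolderConjugate ((1 + α) / α) := by
    convert Real.HolderConjugate.conjExponent (by linarith : 1 < 1 + α) using 1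
    rw [Real.conjExponent, add_sub_cancel_left]
  set a : ℝ := (1 + |(K : ℝ) - M|)⁻¹
  set b : ℝ := ((K : ℝ) ^ (2 * α))⁻¹
  have hab := Real.young_inequality_of_nonneg (by positivity : 0 ≤ a) (by positivity : 0 ≤ b) hq
  have ha : a ^ (1 + α) ≤ 1 / |(((K : ℤ) - M : ℤ) : ℝ) + 1 / 2| ^ (1 + α) := by
    have hpos : 0 < |(((K : ℤ) - M : ℤ) : ℝ) + 1 / 2| := by
      have hodd : (2 * ((K : ℤ) - M) + 1 : ℤ) ≠ 0 := by omega
      have : (2 * (((K : ℤ) - M : ℤ) : ℝ) + 1) ≠ 0 := by exact_mod_cast hodd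
      exact abs_pos.mpr fun h => this (by linarith)
    rw [Real.inv_rpow (by positivity), one_div]
    refine inv_anti₀ (Real.rpow_pos_of_pos hpos _) (Real.rpow_le_rpow hpos.le ?_ (by linarith))
    push_cast
    linarith [abs_add_le ((K : ℝ) - M) (1 / 2)]
  have hb : b ^ ((1 + α) / α) = ((K : ℝ) ^ (2 + 2 * α))⁻¹ := by
    rw [Real.inv_rpow (by positivity), ← Real.rpow_mul (Nat.cast_nonneg K)]
    congr 2
    field_simp
  calc convKernel α M K = a * b := mul_comm _ _
    _ ≤ a ^ (1 + α) / (1 + α) + b ^ ((1 + α) / α) / ((1 + α) / α) := hab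
    _ ≤ a ^ (1 + α) + b ^ ((1 + α) / α) := by
        gcongr
        · exact div_le_self (by positivity) (by linarith)
        · exact div_le_self (by positivity) ((le_div_iff₀ hα).mpr (by linarith))
    _ ≤ _ := by rw [hb, add_comm]; gcongr

theorem exists_tsum_convKernel_le {α : ℝ} (hα : 0 < α) :
    ∃ T, 0 < T ∧ ∀ M, Summable (convKernel α M) ∧ ∑' K, convKernel α M K ≤ T := by
  have h₁ : Summable fun K : ℕ => ((K : ℝ) ^ (2 + 2 * α))⁻¹ :=
    Real.summable_nat_rpow_inv.mpr (by linarith)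
  have h₂ : Summable fun n : ℤ => 1 / |(n : ℝ) + 1 / 2| ^ (1 + α) :=
    (Real.summable_one_div_int_add_rpow _ _).mpr (by linarith)
  refine ⟨∑' K : ℕ, ((K : ℝ) ^ (2 + 2 * α))⁻¹ + ∑' n : ℤ, 1 / |(n : ℝ) + 1 / 2| ^ (1 + α),
    ?_, fun M => ?_⟩
  · refine add_pos_of_pos_of_nonneg (h₁.tsum_pos (fun _ => by positivity) 1 (by simp))
      (tsum_nonneg fun _ => by positivity)
  have hinj : Function.Injective fun K : ℕ => (K : ℤ) - M := fun K K' h => by simpa using h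
  have h₂' := h₂.comp_injective hinj
  have hsum := h₁.add h₂'
  refine ⟨hsum.of_nonneg_of_le (convKernel_nonneg α M) (convKernel_le hα M), ?_⟩
  calc ∑' K, convKernel α M K
      ≤ ∑' K : ℕ, (((K : ℝ) ^ (2 + 2 * α))⁻¹ + 1 / |(((K : ℤ) - M : ℤ) : ℝ) + 1 / 2| ^ (1 + α)) :=
        (hsum.of_nonneg_of_le (convKernel_nonneg α M) (convKernel_le hα M)).tsum_le_tsum
          (convKernel_le hα M) hsum
    _ = _ + _ := h₁.tsum_add h₂'
    _ ≤ _ := add_le_add le_rfl (tsum_comp_le_tsum_of_inj h₂ (fun _ => by positivity) hinj)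

section Weights

variable {s α : ℝ} {N K M : ℕ}

theorem mwt_eq (s α : ℝ) (N M : ℕ) :
    mwt s α N M = ((N : ℝ) * M) ^ α * blockRatio N M ^ (s / 2) := rfl

theorem mwtPlus_eq (s α : ℝ) (N M : ℕ) :
    mwtPlus s α N M = mwt s α N M * (1 + |(N : ℝ) - M|) := by
  rw [mwtPlus, mwt]; ring

theorem mwt_nonneg (s α : ℝ) (N M : ℕ) : 0 ≤ mwt s α N M := by
  unfold mwt; positivity

theorem one_le_mwt (hs : 0 ≤ s) (hα : 0 ≤ α) (hN : 1 ≤ N) (hM : 1 ≤ M) : 1 ≤ mwt s α N M := by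
  have hN' : (1 : ℝ) ≤ N := by exact_mod_cast hN
  have hM' : (1 : ℝ) ≤ M := by exact_mod_cast hM
  rw [mwt_eq]
  exact one_le_mul_of_one_le_of_one_le
    (Real.one_le_rpow (one_le_mul_of_one_le_of_one_le hN' hM') hα)
    (Real.one_le_rpow (one_le_blockRatio hN' hM') (by linarith))

theorem one_le_mwtPlus (hs : 0 ≤ s) (hα : 0 ≤ α) (hN : 1 ≤ N) (hM : 1 ≤ M) :
    1 ≤ mwtPlus s α N M := by
  rw [mwtPlus_eq]
  exact one_le_mul_of_one_le_of_one_le (one_le_mwt hs hα hN hM)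
    (le_add_of_nonneg_right (abs_nonneg _))

theorem mwt_le_mul (hs : 0 ≤ s) (hN : 1 ≤ N) (hK : 1 ≤ K) (hM : 1 ≤ M) :
    mwt s α N M ≤ mwt s α N K * mwt s α K M * ((K : ℝ) ^ (2 * α))⁻¹ := by
  have hN' : (1 : ℝ) ≤ N := by exact_mod_cast hN
  have hK' : (1 : ℝ) ≤ K := by exact_mod_cast hK
  have hM' : (1 : ℝ) ≤ M := by exact_mod_cast hM
  have hK0 : (0 : ℝ) < K := by linarith
  have hpow : ((N : ℝ) * K) ^ α * ((K : ℝ) * M) ^ α * ((K : ℝ) ^ (2 * α))⁻¹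
      = ((N : ℝ) * M) ^ α := by
    rw [← Real.mul_rpow (by positivity) (by positivity), two_mul, Real.rpow_add hK0,
      ← Real.mul_rpow hK0.le hK0.le, show (N : ℝ) * K * (K * M) = N * M * (K * K) by ring,
      Real.mul_rpow (by positivity) (by positivity), mul_inv_cancel_right₀ (by positivity)]
  have hratio : blockRatio N M ^ (s / 2) ≤ blockRatio N K ^ (s / 2) * blockRatio K M ^ (s / 2) := by
    rw [← Real.mul_rpow (zero_le_one.trans (one_le_blockRatio hN' hK'))
      (zero_le_one.trans (one_le_blockRatio hK' hM'))]
    exact Real.rpow_le_rpow (zero_le_one.trans (one_le_blockRatio hN' hM'))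
      (blockRatio_le_mul hN' hK' hM') (by linarith)
  calc mwt s α N M = ((N : ℝ) * M) ^ α * blockRatio N M ^ (s / 2) := rfl
    _ ≤ ((N : ℝ) * M) ^ α * (blockRatio N K ^ (s / 2) * blockRatio K M ^ (s / 2)) :=
        mul_le_mul_of_nonneg_left hratio (by positivity)
    _ = _ := by rw [mwt_eq, mwt_eq, ← hpow]; ring


theorem mwt_le_mwt_mul_mwtPlus (hs : 0 ≤ s) (hN : 1 ≤ N) (hK : 1 ≤ K) (hM : 1 ≤ M) :
    mwt s α N M ≤ mwt s α N K * mwtPlus s α K M * convKernel α M K := by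
  have hD : (1 + |(K : ℝ) - M|) ≠ 0 := by positivity
  convert mwt_le_mul (α := α) hs hN hK hM using 1
  rw [mwtPlus_eq, convKernel]
  field_simp

theorem mwt_le_mwtPlus_mul_mwt (hs : 0 ≤ s) (hN : 1 ≤ N) (hK : 1 ≤ K) (hM : 1 ≤ M) :
    mwt s α N M ≤ mwtPlus s α N K * mwt s α K M * convKernel α N K := by
  have hD : (1 + |(K : ℝ) - N|) ≠ 0 := by positivity
  convert mwt_le_mul (α := α) hs hN hK hM using 1
  rw [mwtPlus_eq, convKernel, abs_sub_comm (N : ℝ)]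
  field_simp

theorem mwtPlus_le_mul (hs : 0 ≤ s) (hN : 1 ≤ N) (hK : 1 ≤ K) (hM : 1 ≤ M) :
    mwtPlus s α N M ≤
      mwtPlus s α N K * mwtPlus s α K M * (convKernel α N K + convKernel α M K) := by
  have hNK : (0 : ℝ) < 1 + |(K : ℝ) - N| := by positivity
  have hKM : (0 : ℝ) < 1 + |(K : ℝ) - M| := by positivity
  have htri : 1 + |(N : ℝ) - M| ≤ (1 + |(K : ℝ) - M|) + (1 + |(K : ℝ) - N|) := by
    linarith [abs_sub_le (N : ℝ) K M, abs_sub_comm (N : ℝ) K]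
  have hw := mwt_le_mul (α := α) hs hN hK hM
  calc mwtPlus s α N M = mwt s α N M * (1 + |(N : ℝ) - M|) := mwtPlus_eq s α N M
    _ ≤ mwt s α N K * mwt s α K M * ((K : ℝ) ^ (2 * α))⁻¹ *
          ((1 + |(K : ℝ) - M|) + (1 + |(K : ℝ) - N|)) :=
        mul_le_mul hw htri (by positivity)
          (mul_nonneg (mul_nonneg (mwt_nonneg ..) (mwt_nonneg ..)) (by positivity))
    _ = _ := by
        rw [mwtPlus_eq, mwtPlus_eq, convKernel, convKernel, abs_sub_comm (N : ℝ)]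
        field_simp

end Weights

/-- `MBound s α`, `MPBound s α`, `MNorm s α` and `MPNorm s α` are `WeightedBound` and
`weightedNorm` for the weights `mwt s α` and `mwtPlus s α`, by definition. -/
def WeightedBound (W : ℕ → ℕ → ℝ) (A : OddTuple d → OddTuple d → ℂ) (C : ℝ) : Prop :=
  ∀ a b : OddTuple d, W (wE a) (wE b) * blockNorm A (wE a) (wE b) ≤ C

noncomputable def weightedNorm (W : ℕ → ℕ → ℝ) (A : OddTuple d → OddTuple d → ℂ) : ℝ :=
  sInf {C | 0 ≤ C ∧ WeightedBound W A C}

namespace WeightedBound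

variable {W : ℕ → ℕ → ℝ} {A B : OddTuple d → OddTuple d → ℂ} {C D : ℝ}

theorem mono (hA : WeightedBound W A C) (hCD : C ≤ D) : WeightedBound W A D :=
  fun a b => (hA a b).trans hCD

theorem nonneg (hW : ∀ a b : OddTuple d, 0 ≤ W (wE a) (wE b)) (hA : WeightedBound W A C) :
    0 ≤ C :=
  let a : OddTuple d := ⟨fun _ => 1, fun _ => odd_one⟩
  (mul_nonneg (hW a a) (blockNorm_nonneg A _ _)).trans (hA a a)

theorem smul (hA : WeightedBound W A C) (c : ℂ) : WeightedBound W (c • A) (‖c‖ * C) :=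
  fun a b => by
    rw [blockNorm_smul, mul_left_comm]
    exact mul_le_mul_of_nonneg_left (hA a b) (norm_nonneg c)

theorem add (hW : ∀ a b : OddTuple d, 0 ≤ W (wE a) (wE b)) (hA : WeightedBound W A C)
    (hB : WeightedBound W B D) : WeightedBound W (A + B) (C + D) := fun a b =>
  calc W (wE a) (wE b) * blockNorm (A + B) (wE a) (wE b)
      ≤ W (wE a) (wE b) * (blockNorm A (wE a) (wE b) + blockNorm B (wE a) (wE b)) :=
        mul_le_mul_of_nonneg_left (blockNorm_add_le A B _ _) (hW a b)
    _ ≤ C + D := by rw [mul_add]; exact add_le_add (hA a b) (hB a b)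

theorem neg (hA : WeightedBound W A C) : WeightedBound W (-A) C := fun a b => by
  rw [blockNorm_neg]; exact hA a b

theorem norm_le (hW : ∀ a b : OddTuple d, 1 ≤ W (wE a) (wE b)) (hA : WeightedBound W A C)
    (a b : OddTuple d) : ‖A a b‖ ≤ C :=
  (norm_le_blockNorm A a b).trans
    ((le_mul_of_one_le_left (blockNorm_nonneg A _ _) (hW a b)).trans (hA a b))

theorem weightedNorm_le (hA : WeightedBound W A C) (hC : 0 ≤ C) : weightedNorm W A ≤ C :=
  csInf_le ⟨0, fun _ h => h.1⟩ ⟨hC, hA⟩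

end WeightedBound

theorem weightedNorm_nonneg (W : ℕ → ℕ → ℝ) (A : OddTuple d → OddTuple d → ℂ) :
    0 ≤ weightedNorm W A :=
  Real.sInf_nonneg fun _ h => h.1

theorem WeightedBound.tsum {W : ℕ → ℕ → ℝ} (hW : ∀ a b : OddTuple d, 0 < W (wE a) (wE b))
    {F : ℕ → OddTuple d → OddTuple d → ℂ} {δ : ℕ → ℝ} (hδ : Summable δ)
    (hF : ∀ k, WeightedBound W (F k) (δ k)) :
    WeightedBound W (fun a b => ∑' k, F k a b) (∑' k, δ k) := fun a b => by
  rw [← le_div_iff₀' (hW a b), ← tsum_div_const]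
  exact blockNorm_tsum_le (hδ.div_const _) fun k => (le_div_iff₀' (hW a b)).mpr (hF k a b)

theorem summable_blockNorm_mul {X Y : OddTuple d → OddTuple d → ℂ}
    (h : ∀ a b : OddTuple d, Summable fun K => blockNorm X (wE a) K * blockNorm Y K (wE b))
    (N M : ℕ) : Summable fun K => blockNorm X N K * blockNorm Y K M := by
  rcases isEmpty_or_nonempty (Block d N) with hN | ⟨⟨a, rfl⟩⟩
  · simp [blockNorm_of_isEmpty_left]
  rcases isEmpty_or_nonempty (Block d M) with hM | ⟨⟨b, rfl⟩⟩
  · simp [blockNorm_of_isEmpty_right]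
  exact h a b

theorem WeightedBound.matMul {W W₁ W₂ : ℕ → ℕ → ℝ} {τ : ℕ → ℕ → ℕ → ℝ}
    {X Y : OddTuple d → OddTuple d → ℂ} {C₁ C₂ T : ℝ}
    (hW : ∀ a b : OddTuple d, 0 < W (wE a) (wE b))
    (hW₁ : ∀ a b : OddTuple d, 0 ≤ W₁ (wE a) (wE b))
    (hW₂ : ∀ a b : OddTuple d, 0 ≤ W₂ (wE a) (wE b))
    (hsub : ∀ a c b : OddTuple d,
      W (wE a) (wE b) ≤ W₁ (wE a) (wE c) * W₂ (wE c) (wE b) * τ (wE a) (wE c) (wE b))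
    (hτ : ∀ N K M, 0 ≤ τ N K M) (hτT : ∀ N M, Summable (τ N · M) ∧ ∑' K, τ N K M ≤ T)
    (hX : WeightedBound W₁ X C₁) (hY : WeightedBound W₂ Y C₂) :
    WeightedBound W (_root_.matMul X Y) (C₁ * C₂ * T) := by
  have hC₁ := hX.nonneg hW₁
  have hC₂ := hY.nonneg hW₂
  have hterm (a b : OddTuple d) (K : ℕ) :
      W (wE a) (wE b) * (blockNorm X (wE a) K * blockNorm Y K (wE b))
        ≤ C₁ * C₂ * τ (wE a) K (wE b) := by
    rcases isEmpty_or_nonempty (Block d K) with hK | ⟨⟨c, rfl⟩⟩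
    · rw [blockNorm_of_isEmpty_right, zero_mul, mul_zero]
      exact mul_nonneg (mul_nonneg hC₁ hC₂) (hτ _ _ _)
    calc W (wE a) (wE b) * (blockNorm X (wE a) (wE c) * blockNorm Y (wE c) (wE b))
        ≤ W₁ (wE a) (wE c) * W₂ (wE c) (wE b) * τ (wE a) (wE c) (wE b) *
            (blockNorm X (wE a) (wE c) * blockNorm Y (wE c) (wE b)) :=
          mul_le_mul_of_nonneg_right (hsub a c b)
            (mul_nonneg (blockNorm_nonneg _ _ _) (blockNorm_nonneg _ _ _))
      _ = (W₁ (wE a) (wE c) * blockNorm X (wE a) (wE c)) *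
            (W₂ (wE c) (wE b) * blockNorm Y (wE c) (wE b)) * τ (wE a) (wE c) (wE b) := by ring
      _ ≤ C₁ * C₂ * τ (wE a) (wE c) (wE b) :=
          mul_le_mul_of_nonneg_right (mul_le_mul (hX a c) (hY c b)
            (mul_nonneg (hW₂ c b) (blockNorm_nonneg _ _ _)) hC₁) (hτ _ _ _)
  have hsum := summable_blockNorm_mul fun a b =>
    (((hτT _ _).1.mul_left (C₁ * C₂)).div_const (W (wE a) (wE b))).of_nonneg_of_le
      (fun K => mul_nonneg (blockNorm_nonneg _ _ _) (blockNorm_nonneg _ _ _))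
      fun K => (le_div_iff₀' (hW a b)).mpr (hterm a b K)
  intro a b
  calc W (wE a) (wE b) * blockNorm (_root_.matMul X Y) (wE a) (wE b)
      ≤ W (wE a) (wE b) * ∑' K, blockNorm X (wE a) K * blockNorm Y K (wE b) :=
        mul_le_mul_of_nonneg_left (blockNorm_matMul_le hsum _ _) (hW a b).le
    _ = ∑' K, W (wE a) (wE b) * (blockNorm X (wE a) K * blockNorm Y K (wE b)) :=
        tsum_mul_left.symm
    _ ≤ ∑' K, C₁ * C₂ * τ (wE a) K (wE b) :=
        ((hsum _ _).mul_left _).tsum_le_tsum (hterm a b) ((hτT _ _).1.mul_left _)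
    _ ≤ C₁ * C₂ * T := by
        rw [tsum_mul_left]
        exact mul_le_mul_of_nonneg_left (hτT _ _).2 (mul_nonneg hC₁ hC₂)

section MatrixClasses

variable {s α T CA CB : ℝ} {A B : OddTuple d → OddTuple d → ℂ}

theorem MBound.matMul_mpBound (hd : 1 ≤ d) (hs : 0 ≤ s) (hα : 0 ≤ α)
    (hT : ∀ M, Summable (convKernel α M) ∧ ∑' K, convKernel α M K ≤ T)
    (hA : MBound s α A CA) (hB : MPBound s α B CB) : MBound s α (matMul A B) (CA * CB * T) :=
  WeightedBound.matMul (τ := fun _ K M => convKernel α M K)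
    (fun a b => one_pos.trans_le (one_le_mwt hs hα (one_le_wE hd a) (one_le_wE hd b)))
    (fun _ _ => mwt_nonneg ..)
    (fun a b => zero_le_one.trans (one_le_mwtPlus hs hα (one_le_wE hd a) (one_le_wE hd b)))
    (fun a c b => mwt_le_mwt_mul_mwtPlus hs (one_le_wE hd a) (one_le_wE hd c) (one_le_wE hd b))
    (fun _ _ _ => convKernel_nonneg ..) (fun _ M => hT M) hA hB

theorem MPBound.matMul_mBound (hd : 1 ≤ d) (hs : 0 ≤ s) (hα : 0 ≤ α)
    (hT : ∀ M, Summable (convKernel α M) ∧ ∑' K, convKernel α M K ≤ T)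
    (hB : MPBound s α B CB) (hA : MBound s α A CA) : MBound s α (matMul B A) (CB * CA * T) :=
  WeightedBound.matMul (τ := fun N K _ => convKernel α N K)
    (fun a b => one_pos.trans_le (one_le_mwt hs hα (one_le_wE hd a) (one_le_wE hd b)))
    (fun a b => zero_le_one.trans (one_le_mwtPlus hs hα (one_le_wE hd a) (one_le_wE hd b)))
    (fun _ _ => mwt_nonneg ..)
    (fun a c b => mwt_le_mwtPlus_mul_mwt hs (one_le_wE hd a) (one_le_wE hd c) (one_le_wE hd b))
    (fun _ _ _ => convKernel_nonneg ..) (fun N _ => hT N) hB hA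

theorem MPBound.matMul (hd : 1 ≤ d) (hs : 0 ≤ s) (hα : 0 ≤ α)
    (hT : ∀ M, Summable (convKernel α M) ∧ ∑' K, convKernel α M K ≤ T)
    (hA : MPBound s α A CA) (hB : MPBound s α B CB) :
    MPBound s α (_root_.matMul A B) (CA * CB * (2 * T)) := by
  have hW (a b : OddTuple d) := one_le_mwtPlus hs hα (one_le_wE hd a) (one_le_wE hd b)
  refine WeightedBound.matMul (τ := fun N K M => convKernel α N K + convKernel α M K)
    (fun a b => one_pos.trans_le (hW a b)) (fun a b => zero_le_one.trans (hW a b))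
    (fun a b => zero_le_one.trans (hW a b))
    (fun a c b => mwtPlus_le_mul hs (one_le_wE hd a) (one_le_wE hd c) (one_le_wE hd b))
    (fun _ _ _ => add_nonneg (convKernel_nonneg ..) (convKernel_nonneg ..))
    (fun N M => ⟨(hT N).1.add (hT M).1, ?_⟩) hA hB
  rw [(hT N).1.tsum_add (hT M).1, two_mul]
  exact add_le_add (hT N).2 (hT M).2

theorem matPow_one (B : OddTuple d → OddTuple d → ℂ) : matPow B 1 = B := by
  funext a b
  simp only [matPow, matMul, mul_ite, mul_one, mul_zero]
  exact tsum_ite_eq b (B a)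

theorem MPBound.matPow_succ (hd : 1 ≤ d) (hs : 0 ≤ s) (hα : 0 ≤ α)
    (hT : ∀ M, Summable (convKernel α M) ∧ ∑' K, convKernel α M K ≤ T)
    (hB : MPBound s α B CB) (k : ℕ) : MPBound s α (matPow B (k + 1)) (CB * (2 * T * CB) ^ k) := by
  induction k with
  | zero => simpa [matPow_one] using hB
  | succ k ih =>
    exact WeightedBound.mono (hB.matMul hd hs hα hT ih) (le_of_eq (by ring))

end MatrixClasses

section Series

variable {W : ℕ → ℕ → ℝ}

theorem exists_weightedBound_tendsto_sum_range (hW : ∀ a b : OddTuple d, 1 ≤ W (wE a) (wE b))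
    {F : ℕ → OddTuple d → OddTuple d → ℂ} {δ : ℕ → ℝ} (hδ : Summable δ)
    (hF : ∀ k, WeightedBound W (F k) (δ k)) :
    ∃ S, WeightedBound W S (∑' k, δ k) ∧
      MatTendsto (weightedNorm W) (fun m => ∑ k ∈ range m, F k) S := by
  have hW₀ (a b : OddTuple d) : 0 < W (wE a) (wE b) := one_pos.trans_le (hW a b)
  have hentry (a b : OddTuple d) : Summable fun k => F k a b :=
    hδ.of_norm_bounded fun k => (hF k).norm_le hW a b
  refine ⟨fun a b => ∑' k, F k a b, WeightedBound.tsum hW₀ hδ hF, ?_⟩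
  have htail (m : ℕ) : WeightedBound W (∑ k ∈ range m, F k - fun a b => ∑' k, F k a b)
      (∑' k, δ (k + m)) := by
    have hsub : (∑ k ∈ range m, F k - fun a b => ∑' k, F k a b)
        = fun a b => ∑' k, -F (k + m) a b := by
      funext a b
      simp only [Pi.sub_apply, Finset.sum_apply, tsum_neg]
      rw [← (hentry a b).sum_add_tsum_nat_add m]
      ring
    rw [hsub]
    exact WeightedBound.tsum hW₀ ((summable_nat_add_iff m).mpr hδ) fun k => (hF (k + m)).neg
  have hδ₀ (k : ℕ) : 0 ≤ δ k := (hF k).nonneg fun a b => (hW₀ a b).le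
  exact squeeze_zero (fun m => weightedNorm_nonneg _ _)
    (fun m => (htail m).weightedNorm_le (tsum_nonneg fun k => hδ₀ _)) (tendsto_sum_nat_add δ)

theorem exists_weightedBound_tendsto_sum_Icc (hW : ∀ a b : OddTuple d, 1 ≤ W (wE a) (wE b))
    {g : ℕ → OddTuple d → OddTuple d → ℂ} {δ : ℕ → ℝ} (hδ : Summable δ)
    (hg : ∀ k, WeightedBound W (g (k + 1)) (δ k)) :
    ∃ S, WeightedBound W S (∑' k, δ k) ∧
      MatTendsto (weightedNorm W) (fun m => ∑ k ∈ Icc 1 m, g k) S := by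
  have hIcc (m : ℕ) : ∑ k ∈ Icc 1 m, g k = ∑ k ∈ range m, g (k + 1) := by
    rw [← Finset.Ico_add_one_right_eq_Icc, Finset.sum_Ico_eq_sum_range, Nat.add_sub_cancel]
    simp only [add_comm 1]
  simpa only [MatTendsto, hIcc] using exists_weightedBound_tendsto_sum_range hW hδ hg

theorem exists_weightedBound_tendsto_add_sum_Icc (hW : ∀ a b : OddTuple d, 1 ≤ W (wE a) (wE b))
    {X₀ : OddTuple d → OddTuple d → ℂ} {C₀ : ℝ} (hX₀ : WeightedBound W X₀ C₀)
    {g : ℕ → OddTuple d → OddTuple d → ℂ} {δ : ℕ → ℝ} (hδ : Summable δ)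
    (hg : ∀ k, WeightedBound W (g (k + 1)) (δ k)) :
    ∃ S, WeightedBound W S (C₀ + ∑' k, δ k) ∧
      MatTendsto (weightedNorm W) (fun m => X₀ + ∑ k ∈ Icc 1 m, g k) S := by
  obtain ⟨S, hS, hlim⟩ := exists_weightedBound_tendsto_sum_Icc hW hδ hg
  exact ⟨X₀ + S, hX₀.add (fun a b => zero_le_one.trans (hW a b)) hS,
    by simpa only [MatTendsto, add_sub_add_left_eq_sub] using hlim⟩

theorem Real.hasSum_pow_div_factorial_exp (r : ℝ) :
    HasSum (fun n => r ^ n / n !) (Real.exp r) := by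
  rw [Real.exp_eq_exp_ℝ]
  exact NormedSpace.expSeries_div_hasSum_exp r

theorem exists_weightedBound_tendsto_expSeries_sub_one
    (hW : ∀ a b : OddTuple d, 1 ≤ W (wE a) (wE b)) {P : ℕ → OddTuple d → OddTuple d → ℂ}
    {C r : ℝ} (hr : 0 ≤ r) (hP : ∀ k, WeightedBound W (P (k + 1)) (C * r ^ k)) :
    ∃ S, WeightedBound W S (C * Real.exp r) ∧
      MatTendsto (weightedNorm W) (fun m => ∑ k ∈ Icc 1 m, ((k ! : ℂ))⁻¹ • P k) S := by
  have hC : 0 ≤ C := by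
    simpa using (hP 0).nonneg fun a b => zero_le_one.trans (hW a b)
  have hterm (k : ℕ) : WeightedBound W (((k + 1) ! : ℂ)⁻¹ • P (k + 1)) (C * (r ^ k / k !)) := by
    refine ((hP k).smul _).mono ?_
    rw [norm_inv, Complex.norm_natCast, mul_div_assoc', inv_mul_eq_div]
    gcongr
    exact k.le_succ
  rw [← ((Real.hasSum_pow_div_factorial_exp r).mul_left C).tsum_eq]
  exact exists_weightedBound_tendsto_sum_Icc hW
    ((Real.hasSum_pow_div_factorial_exp r).mul_left C).summable hterm

theorem exists_weightedBound_tendsto_expSeries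
    (hW : ∀ a b : OddTuple d, 1 ≤ W (wE a) (wE b)) {X₀ : OddTuple d → OddTuple d → ℂ}
    {P : ℕ → OddTuple d → OddTuple d → ℂ} {C r : ℝ} (hX₀ : WeightedBound W X₀ C)
    (hP : ∀ k, WeightedBound W (P (k + 1)) (C * r ^ (k + 1))) :
    ∃ S, WeightedBound W S (C * Real.exp r) ∧
      MatTendsto (weightedNorm W) (fun m => X₀ + ∑ k ∈ Icc 1 m, ((k ! : ℂ))⁻¹ • P k) S := by
  have hexp := (Real.hasSum_pow_div_factorial_exp r).mul_left C
  have hsum := (summable_nat_add_iff 1).mpr hexp.summable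
  have hterm (k : ℕ) : WeightedBound W (((k + 1) ! : ℂ)⁻¹ • P (k + 1))
      (C * (r ^ (k + 1) / (k + 1) !)) :=
    ((hP k).smul _).mono (le_of_eq (by rw [norm_inv, Complex.norm_natCast]; ring))
  have hexp_eq : C + ∑' k, C * (r ^ (k + 1) / (k + 1) !) = C * Real.exp r := by
    rw [← hexp.tsum_eq, hexp.summable.tsum_eq_zero_add, pow_zero, Nat.factorial_zero,
      Nat.cast_one, div_one, mul_one]
  rw [← hexp_eq]
  exact exists_weightedBound_tendsto_add_sum_Icc hW hX₀ hsum hterm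

end Series

theorem statement14_general (d : ℕ) (hd : 1 ≤ d) (s α : ℝ) (hs : 0 ≤ s) (hα0 : 0 < α) :
    ∃ c : ℝ, 0 < c ∧
      ∀ (A B : OddTuple d → OddTuple d → ℂ) (MA MB : ℝ),
        MBound s α A MA → MPBound s α B MB →
        (∃ S, MPBound s α S (MB * Real.exp (c * MB)) ∧
          MatTendsto (MPNorm s α)
            (fun m => ∑ k ∈ Finset.Icc 1 m, ((Nat.factorial k : ℂ))⁻¹ • matPow B k) S) ∧
        (∃ S, MBound s α S (MA * Real.exp (c * MB)) ∧
          MatTendsto (MNorm s α)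
            (fun m => A + ∑ k ∈ Finset.Icc 1 m,
              ((Nat.factorial k : ℂ))⁻¹ • matMul A (matPow B k)) S) ∧
        (∃ S, MBound s α S (MA * Real.exp (c * MB)) ∧
          MatTendsto (MNorm s α)
            (fun m => A + ∑ k ∈ Finset.Icc 1 m,
              ((Nat.factorial k : ℂ))⁻¹ • matMul (matPow B k) A) S) := by
  obtain ⟨T, hT₀, hT⟩ := exists_tsum_convKernel_le hα0
  refine ⟨2 * T, by positivity, fun A B MA MB hA hB => ?_⟩
  have hW (a b : OddTuple d) : 1 ≤ mwt s α (wE a) (wE b) :=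
    one_le_mwt hs hα0.le (one_le_wE hd a) (one_le_wE hd b)
  have hW' (a b : OddTuple d) : 1 ≤ mwtPlus s α (wE a) (wE b) :=
    one_le_mwtPlus hs hα0.le (one_le_wE hd a) (one_le_wE hd b)
  have hMA : 0 ≤ MA := WeightedBound.nonneg (fun a b => zero_le_one.trans (hW a b)) hA
  have hMB : 0 ≤ MB := WeightedBound.nonneg (fun a b => zero_le_one.trans (hW' a b)) hB
  have hpow := MPBound.matPow_succ hd hs hα0.le hT hB
  have hgrowth (k : ℕ) : MA * (MB * (2 * T * MB) ^ k) * T ≤ MA * (2 * T * MB) ^ (k + 1) := by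
    have : 0 ≤ MA * MB * T * (2 * T * MB) ^ k := by positivity
    linarith [show MA * (2 * T * MB) ^ (k + 1) = 2 * (MA * MB * T * (2 * T * MB) ^ k) by ring]
  refine ⟨exists_weightedBound_tendsto_expSeries_sub_one hW' (by positivity) hpow,
    exists_weightedBound_tendsto_expSeries hW hA fun k => ?_,
    exists_weightedBound_tendsto_expSeries hW hA fun k => ?_⟩
  · exact WeightedBound.mono (hA.matMul_mpBound hd hs hα0.le hT (hpow k)) (hgrowth k)
  · exact WeightedBound.mono ((hpow k).matMul_mBound hd hs hα0.le hT hA)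
      ((le_of_eq (by ring)).trans (hgrowth k))

/-- (Exponential estimates (2.5)–(2.6) of Lemma 2.3 of the paper.)
For `s ≥ 0`, `0 < α ≤ 1` there is `c(α,s,d) > 0` such that for `A ∈ M_{s,α}` with
`|A|_{s,α} ≤ M_A` and `B ∈ M⁺_{s,α}` with `|B|_{s,α+} ≤ M_B`:
(i) `e^B − Id = ∑_{k≥1} B^k/k!` converges in `M⁺_{s,α}` with
    `|e^B − Id|_{s,α+} ≤ M_B exp(c M_B)`;
(ii) `A e^B` and `e^B A` converge in `M_{s,α}` with norms `≤ M_A exp(c M_B)`. -/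
theorem statement14 (d : ℕ) (hd : 1 ≤ d) (s α : ℝ) (hs : 0 ≤ s) (hα0 : 0 < α) (hα1 : α ≤ 1) :
    ∃ c : ℝ, 0 < c ∧
      ∀ (A B : OddTuple d → OddTuple d → ℂ) (MA MB : ℝ),
        MBound s α A MA → MPBound s α B MB →
        (∃ S, MPBound s α S (MB * Real.exp (c * MB)) ∧
          MatTendsto (MPNorm s α)
            (fun m => ∑ k ∈ Finset.Icc 1 m, ((Nat.factorial k : ℂ))⁻¹ • matPow B k) S) ∧
        (∃ S, MBound s α S (MA * Real.exp (c * MB)) ∧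
          MatTendsto (MNorm s α)
            (fun m => A + ∑ k ∈ Finset.Icc 1 m,
              ((Nat.factorial k : ℂ))⁻¹ • matMul A (matPow B k)) S) ∧
        (∃ S, MBound s α S (MA * Real.exp (c * MB)) ∧
          MatTendsto (MNorm s α)
            (fun m => A + ∑ k ∈ Finset.Icc 1 m,
              ((Nat.factorial k : ℂ))⁻¹ • matMul (matPow B k) A) S) :=
  statement14_general d hd s α hs hα0
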